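/- arXiv:2403.07477 — 3 statements merged into one kernel-verified Lean document; each statement's English description precedes it below -/
import Mathlib

section
/- Let m ≥ 2. If r is a rational root of p_m(n,t) for some n, then r ∈ {-1, 0}. -/
noncomputable def pm (m : ℕ) : ℕ → Polynomial ℤ
  | 0 => 1
  | n + 1 =>
      Polynomial.X * pm m n +
        if h : 2 ≤ m ∧ m ∣ (n + 1) then pm m ((n + 1) / m) else 0
decreasing_by
  · exact Nat.lt_succ_self n
  · exact Nat.div_lt_self (Nat.succ_pos n) (by omega)

/-!
Since `pm m n` is monic, a rational root is an integer `k`. Write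
`pm m (n + 1) = X * pm m n + c` with `c` either `0` or some `pm m j`, `j ≤ n`. This makes
`pm m n` positive at positive arguments, so `k ≤ 0`. For `|x| ≥ 2` it gives
`|pm m (n + 1)(x)| ≥ |x| |pm m n (x)| - |pm m j (x)|`, so inductively `n ↦ |pm m n (x)|` is
nondecreasing from `1` and `x` is not a root. Hence `k ∈ {-1, 0}`.
-/

open Polynomial

@[simp]
lemma pm_zero (m : ℕ) : pm m 0 = 1 := by
  rw [pm]

lemma pm_succ_eq (m n : ℕ) :
    ∃ c, pm m (n + 1) = X * pm m n + c ∧ (c = 0 ∨ ∃ j ≤ n, c = pm m j) := by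
  rw [pm.eq_2]
  split_ifs with h
  · exact ⟨_, rfl, .inr ⟨_, Nat.lt_succ_iff.1 (Nat.div_lt_self n.succ_pos h.1), rfl⟩⟩
  · exact ⟨0, rfl, .inl rfl⟩

lemma degree_pm (m n : ℕ) : (pm m n).degree = n := by
  induction n using Nat.strong_induction_on with
  | _ n ih =>
    cases n with
    | zero => simp
    | succ n =>
      have hX : (X * pm m n).degree = ↑(n + 1) := by
        rw [degree_mul, degree_X, ih n n.lt_succ_self, add_comm]; rfl
      obtain ⟨c, hc, rfl | ⟨j, hj, rfl⟩⟩ := pm_succ_eq m n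
      · rw [hc, add_zero, hX]
      · have hj_lt : (pm m j).degree < (X * pm m n).degree := by
          rw [hX, ih j (by omega)]
          exact_mod_cast Nat.lt_succ_of_le hj
        rw [hc, degree_add_eq_left_of_degree_lt hj_lt, hX]

lemma monic_pm (m n : ℕ) : (pm m n).Monic := by
  induction n with
  | zero => simp
  | succ n ih =>
    obtain ⟨c, hc, rfl | ⟨j, hj, rfl⟩⟩ := pm_succ_eq m n
    · rw [hc, add_zero]
      exact monic_X.mul ih
    · rw [hc]
      refine (monic_X.mul ih).add_of_left ?_
      rw [degree_mul, degree_X, degree_pm, degree_pm, add_comm]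
      exact_mod_cast Nat.lt_succ_of_le hj

section Ordered

variable {R : Type*} [Ring R] [LinearOrder R] [IsStrictOrderedRing R] (m : ℕ)

lemma aeval_pm_pos {x : R} (hx : 0 < x) (n : ℕ) : 0 < aeval x (pm m n) := by
  induction n using Nat.strong_induction_on with
  | _ n ih =>
    cases n with
    | zero => simp
    | succ n =>
      obtain ⟨c, hc, hc'⟩ := pm_succ_eq m n
      have hc_nonneg : 0 ≤ aeval x c := by
        rcases hc' with rfl | ⟨j, hj, rfl⟩
        · simp
        · exact (ih j (by omega)).le
      rw [hc, map_add, map_mul, aeval_X]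
      have := ih n n.lt_succ_self
      positivity

lemma abs_aeval_pm_monotone {x : R} (hx : 2 ≤ |x|) :
    Monotone fun n => |aeval x (pm m n)| := by
  suffices h : ∀ n, ∀ j ≤ n, |aeval x (pm m j)| ≤ |aeval x (pm m n)| from
    fun j n hjn => h n j hjn
  intro n
  induction n with
  | zero => intro j hj; rw [Nat.le_zero.1 hj]
  | succ n ih =>
    have hstep : |aeval x (pm m n)| ≤ |aeval x (pm m (n + 1))| := by
      obtain ⟨c, hc, hc'⟩ := pm_succ_eq m n
      have hc_le : |aeval x c| ≤ |aeval x (pm m n)| := by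
        rcases hc' with rfl | ⟨j, hj, rfl⟩
        · simp
        · exact ih j hj
      rw [hc, map_add, map_mul, aeval_X]
      calc |aeval x (pm m n)| = 2 * |aeval x (pm m n)| - |aeval x (pm m n)| := by
            rw [two_mul, add_sub_cancel_right]
        _ ≤ |x| * |aeval x (pm m n)| - |aeval x c| := by gcongr
        _ ≤ |x * aeval x (pm m n) + aeval x c| := by
          rw [← abs_mul]; exact abs_sub_abs_le_abs_add _ _
    intro j hj
    rcases Nat.le_succ_iff.1 hj with hj | rfl
    · exact (ih j hj).trans hstep
    · rfl

lemma one_le_abs_aeval_pm {x : R} (hx : 2 ≤ |x|) (n : ℕ) : 1 ≤ |aeval x (pm m n)| := by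
  simpa using abs_aeval_pm_monotone m hx (Nat.zero_le n)

end Ordered

theorem rational_roots_pm_general (m : ℕ) (n : ℕ) (r : ℚ)
    (h : (Polynomial.aeval r) (pm m n) = 0) : r = -1 ∨ r = 0 := by
  obtain ⟨k, rfl⟩ := IsIntegrallyClosed.isIntegral_iff.mp ⟨pm m n, monic_pm m n, h⟩
  rw [algebraMap_int_eq, eq_intCast] at h ⊢
  have hk_nonpos : ¬ 0 < k := fun hk =>
    (aeval_pm_pos m (Int.cast_pos.2 hk) n).ne' h
  have hk_small : ¬ 2 ≤ |k| := fun hk =>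
    absurd (one_le_abs_aeval_pm m (x := (k : ℚ)) (by exact_mod_cast hk) n) (by simp [h])
  have : k = -1 ∨ k = 0 := by
    rw [le_abs'] at hk_small
    omega
  rcases this with rfl | rfl <;> simp

/-- Any rational root of any m-ary partition polynomial is -1 or 0. -/
theorem rational_roots_pm (m : ℕ) (hm : 2 ≤ m) (n : ℕ) (r : ℚ)
    (h : (Polynomial.aeval r) (pm m n) = 0) : r = -1 ∨ r = 0 :=
  rational_roots_pm_general m n r h
end

section
/- Let m ≥ 2 be even. The sequence (p_m(n,-1))_{n=0}^∞ is m-automatic, i.e., its m-kernel { (p_m(m^i n + j, -1))_{n=0}^∞ : i ≥ 0, 0 ≤ j < m^i } is a finite set of sequences. -/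
open Polynomial

def evenDigitsIndicator (m n : ℕ) : ℤ := if ∀ d ∈ m.digits n, Even d then 1 else 0

section

variable {m : ℕ}

theorem evenDigitsIndicator_mul_add (hm : 2 ≤ m) (q : ℕ) {r : ℕ} (hr : r < m) :
    evenDigitsIndicator m (m * q + r) = if Even r then evenDigitsIndicator m q else 0 := by
  by_cases h : r = 0 ∧ q = 0
  · simp [h.1, h.2, evenDigitsIndicator]
  rw [evenDigitsIndicator, add_comm, Nat.digits_add m hm r q hr (by tauto)]
  simp only [List.forall_mem_cons, ite_and, evenDigitsIndicator]

theorem pow_succ_mul_add_eq (i n j : ℕ) :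
    m ^ (i + 1) * n + j = m * (m ^ i * n + j / m) + j % m := by
  conv_lhs => rw [← Nat.div_add_mod j m]
  ring

theorem evenDigitsIndicator_pow_mul_add (hm : 2 ≤ m) (i : ℕ) {j : ℕ} (hj : j < m ^ i)
    (n : ℕ) :
    evenDigitsIndicator m (m ^ i * n + j) = evenDigitsIndicator m j * evenDigitsIndicator m n := by
  induction i generalizing j with
  | zero => simp_all [evenDigitsIndicator]
  | succ i ih =>
    have hjm : j % m < m := Nat.mod_lt _ (by omega)
    have hjd : j / m < m ^ i := Nat.div_lt_of_lt_mul (pow_succ' m i ▸ hj)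
    have hj_digit : evenDigitsIndicator m j =
        if Even (j % m) then evenDigitsIndicator m (j / m) else 0 := by
      conv_lhs => rw [← Nat.div_add_mod j m]
      exact evenDigitsIndicator_mul_add hm _ hjm
    rw [pow_succ_mul_add_eq, evenDigitsIndicator_mul_add hm _ hjm, ih hjd, hj_digit, ite_mul,
      zero_mul]

theorem evenDigitsIndicator_eq_zero_or_one (n : ℕ) :
    evenDigitsIndicator m n = 0 ∨ evenDigitsIndicator m n = 1 := by
  unfold evenDigitsIndicator; split_ifs <;> simp

theorem evenDigitsIndicator_succ (hm : 2 ≤ m) (hme : Even m) (b : ℕ) :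
    evenDigitsIndicator m (b + 1) =
      evenDigitsIndicator m b + (-1) ^ ((b + 1) % m) * evenDigitsIndicator m ((b + 1) / m) := by
  obtain ⟨c, s, hs, hb⟩ : ∃ c s, s < m ∧ b = m * c + s :=
    ⟨b / m, b % m, Nat.mod_lt _ (by omega), (Nat.div_add_mod b m).symm⟩
  subst hb
  rcases Nat.lt_or_ge (s + 1) m with hs1 | hs1
  · rw [add_assoc, evenDigitsIndicator_mul_add hm c hs1, evenDigitsIndicator_mul_add hm c hs,
      Nat.mul_add_mod, Nat.mod_eq_of_lt hs1, Nat.mul_add_div (by omega), Nat.div_eq_of_lt hs1]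
    rcases Nat.even_or_odd s with he | ho
    · simp [he, Nat.even_add_one]
    · simp [ho]
  · have hs' : s = m - 1 := by omega
    have hodd : ¬ Even (m - 1) := by
      rw [Nat.even_sub (by omega)]; simp [hme]
    have hmul : m * c + s + 1 = m * (c + 1) + 0 := by rw [hs', Nat.mul_succ]; omega
    rw [hmul, evenDigitsIndicator_mul_add hm _ (by omega), evenDigitsIndicator_mul_add hm _ hs, hs',
      if_neg hodd]
    simp [show 0 < m by omega]

theorem pm_succ_of_not_dvd {n : ℕ} (h : ¬ m ∣ n + 1) : pm m (n + 1) = X * pm m n := by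
  rw [pm, dif_neg (fun h' => h h'.2), add_zero]

theorem pm_mul_succ (hm : 2 ≤ m) (a : ℕ) :
    pm m (m * (a + 1)) = X * pm m (m * a + (m - 1)) + pm m (a + 1) := by
  have h : m * (a + 1) = m * a + (m - 1) + 1 := by rw [Nat.mul_succ]; omega
  rw [h, pm.eq_2 m (m * a + (m - 1)), dif_pos ⟨hm, h ▸ dvd_mul_right m (a + 1)⟩, ← h,
    Nat.mul_div_cancel_left _ (by omega)]

theorem pm_eval_neg_one_mul_add (hm : 2 ≤ m) (hme : Even m) (a : ℕ) {r : ℕ} (hr : r < m) :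
    (pm m (m * a + r)).eval (-1) = (-1) ^ r * evenDigitsIndicator m a := by
  induction a using Nat.strong_induction_on generalizing r with
  | _ a iha =>
  induction r with
  | zero =>
    cases a with
    | zero => simp [pm, evenDigitsIndicator]
    | succ b =>
      have hprev := iha b (by omega) (r := m - 1) (by omega)
      have hquot := iha ((b + 1) / m) (Nat.div_lt_self (by omega) (by omega))
        (Nat.mod_lt (b + 1) (by omega))
      rw [Nat.div_add_mod] at hquot
      have hodd : Odd (m - 1) := Nat.Even.sub_odd (by omega) hme odd_one
      rw [add_zero, pm_mul_succ hm, eval_add, eval_mul, eval_X, hprev, hquot,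
        evenDigitsIndicator_succ hm hme, hodd.neg_one_pow]
      ring
  | succ r ihr =>
    have hndvd : ¬ m ∣ m * a + r + 1 := by
      rw [add_assoc, Nat.dvd_add_right (dvd_mul_right m a)]
      exact Nat.not_dvd_of_pos_of_lt (by omega) hr
    rw [← add_assoc, pm_succ_of_not_dvd hndvd, eval_mul, eval_X, ihr (by omega), pow_succ]
    ring

theorem pm_eval_neg_one_pow_succ_mul_add (hm : 2 ≤ m) (hme : Even m) (i : ℕ) {j : ℕ}
    (hj : j < m ^ (i + 1)) (n : ℕ) :
    (pm m (m ^ (i + 1) * n + j)).eval (-1) =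
      (-1) ^ (j % m) * evenDigitsIndicator m (j / m) * evenDigitsIndicator m n := by
  rw [pow_succ_mul_add_eq, pm_eval_neg_one_mul_add hm hme _ (Nat.mod_lt j (by omega)),
    evenDigitsIndicator_pow_mul_add hm i (Nat.div_lt_of_lt_mul (pow_succ' m i ▸ hj)), mul_assoc]

end

/-- For even m ≥ 2, the sequence (p_m(n,-1))ₙ is m-automatic: its m-kernel is finite. -/
theorem pm_eval_neg_one_automatic (m : ℕ) (hm : 2 ≤ m) (hme : Even m) :
    Set.Finite { s : ℕ → ℤ | ∃ i j : ℕ, j < m ^ i ∧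
      s = fun n => (pm m (m ^ i * n + j)).eval (-1) } := by
  refine (((Set.toFinite ({-1, 0, 1} : Set ℤ)).image
    fun c n => c * evenDigitsIndicator m n).insert fun n => (pm m n).eval (-1)).subset ?_
  rintro s ⟨_ | i, j, hj, rfl⟩
  · obtain rfl : j = 0 := by simpa using hj
    left
    simp
  · right
    refine ⟨(-1) ^ (j % m) * evenDigitsIndicator m (j / m), ?_,
      funext fun n => (pm_eval_neg_one_pow_succ_mul_add hm hme i hj n).symm⟩
    rcases neg_one_pow_eq_or ℤ (j % m) with hs | hs <;>
      rcases evenDigitsIndicator_eq_zero_or_one (m := m) (j / m) with he | he <;>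
      simp [hs, he]
end

section
/- Let M = (m_i) with m_0=1, m_i ≥ 2, and let n = a_0 + a_1 M_1 + ⋯ + a_k M_k be the M-ary representation of n (a_j ∈ {0,…,m_{j+1}-1}). Let f(a,t) := (t^a - 1)/(t-1) and g_k(t) := gcd(t^{m_1+m_2-1} f(m_2, t^{m_1-1}), …, t^{m_k+m_{k+1}-1} f(m_{k+1}, t^{m_k-1})). Then p_M(n,t) ≡ t^{a_0} ∏_{j=1}^{k} t^{a_j} f(a_j + 1, t^{m_j - 1}) (mod g_k(t)). -/
def shiftSeq (m : ℕ → ℕ) : ℕ → ℕ := fun i => if i = 0 then 1 else m (i + 1)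

noncomputable def pM : (ℕ → ℕ) → ℕ → Polynomial ℤ
  | _, 0 => 1
  | m, n + 1 =>
      Polynomial.X * pM m n +
        if h : 2 ≤ m 1 ∧ m 1 ∣ (n + 1) then pM (shiftSeq m) ((n + 1) / m 1) else 0
termination_by m n => n
decreasing_by
  · exact Nat.lt_succ_self n
  · exact Nat.div_lt_self (Nat.succ_pos n) (by omega)

/-- f(a, t^e) = 1 + t^e + t^(2e) + ⋯ + t^((a-1)e), i.e. f(a,s) = (s^a-1)/(s-1) at s = t^e. -/
noncomputable def fpow (a e : ℕ) : Polynomial ℤ :=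
  ∑ i ∈ Finset.range a, Polynomial.X ^ (e * i)

/-- f over ℚ. -/
noncomputable def fpowQ (a e : ℕ) : Polynomial ℚ :=
  ∑ i ∈ Finset.range a, Polynomial.X ^ (e * i)

/-!
Write M' for M with m₁ removed. The recurrence gives p_M(m₁q + r) = tʳ p_M(m₁q) for r < m₁ and
p_M(m₁(q+1)) = t^{m₁} p_M(m₁q) + p_{M'}(q+1). Hence, for q = m₂N + r with r < m₂, the defect
p_M(m₁q) - tʳ f(r+1, t^{m₁-1}) p_{M'}(m₂N) is multiplied by t^{m₁} when r increases inside a block,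
and crossing into the next block adds exactly t^{m₁+m₂-1} f(m₂, t^{m₁-1}) p_{M'}(m₂N). So
p_M(m₁q) ≡ tʳ f(r+1, t^{m₁-1}) p_{M'}(m₂N) modulo the first generator of g_k, and peeling off the
digits one at a time, passing from M to M' each time, yields the congruence modulo any common
divisor of the generators.
-/

open Polynomial Finset

section Recurrence

variable (m : ℕ → ℕ)

lemma pM_zero : pM m 0 = 1 := by rw [pM]

lemma pM_succ (n : ℕ) : pM m (n + 1) = X * pM m n +
    if 2 ≤ m 1 ∧ m 1 ∣ n + 1 then pM (shiftSeq m) ((n + 1) / m 1) else 0 := by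
  rw [pM]
  rfl

lemma pM_mul_add_of_lt (q : ℕ) {r : ℕ} (hr : r < m 1) :
    pM m (m 1 * q + r) = X ^ r * pM m (m 1 * q) := by
  induction r with
  | zero => simp
  | succ r ih =>
    have hndvd : ¬ m 1 ∣ m 1 * q + r + 1 := by
      rw [add_assoc, Nat.dvd_add_right (dvd_mul_right _ _)]
      exact Nat.not_dvd_of_pos_of_lt r.succ_pos hr
    rw [← add_assoc, pM_succ, if_neg (fun h => hndvd h.2), add_zero, ih (by omega), pow_succ']
    ring

lemma pM_mul_succ (h1 : 2 ≤ m 1) (q : ℕ) :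
    pM m (m 1 * (q + 1)) = X ^ m 1 * pM m (m 1 * q) + pM (shiftSeq m) (q + 1) := by
  obtain ⟨s, hs⟩ : ∃ s, m 1 = s + 1 := ⟨m 1 - 1, by omega⟩
  have hq : m 1 * (q + 1) = m 1 * q + s + 1 := by rw [hs]; ring
  have hdiv : (m 1 * q + s + 1) / m 1 = q + 1 := by
    rw [← hq, Nat.mul_div_cancel_left _ (by omega)]
  rw [hq, pM_succ, if_pos ⟨h1, hq ▸ dvd_mul_right _ _⟩, hdiv, pM_mul_add_of_lt m q (by omega), hs]
  ring

lemma shiftSeq_of_pos {i : ℕ} (hi : 0 < i) : shiftSeq m i = m (i + 1) :=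
  if_neg hi.ne'

end Recurrence

lemma fpow_succ (a e : ℕ) : fpow (a + 1) e = 1 + X ^ e * fpow a e := by
  simp only [fpow, pow_mul]
  rw [geom_sum_succ, add_comm]

lemma fpow_map (a e : ℕ) : (fpow a e).map (Int.castRingHom ℚ) = fpowQ a e := by
  simp [fpow, fpowQ, Polynomial.map_sum]

theorem X_pow_mul_fpow_dvd_pM_sub (m : ℕ → ℕ) (h1 : 2 ≤ m 1) (N : ℕ) {r : ℕ} (hr : r < m 2) :
    X ^ (m 1 + m 2 - 1) * fpow (m 2) (m 1 - 1) ∣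
      pM m (m 1 * (m 2 * N + r)) - X ^ r * fpow (r + 1) (m 1 - 1) * pM (shiftSeq m) (m 2 * N) := by
  set g := X ^ (m 1 + m 2 - 1) * fpow (m 2) (m 1 - 1)
  let D : ℕ → ℕ → ℤ[X] := fun N r =>
    pM m (m 1 * (m 2 * N + r)) - X ^ r * fpow (r + 1) (m 1 - 1) * pM (shiftSeq m) (m 2 * N)
  have step : ∀ N r, r + 1 < m 2 → D N (r + 1) = X ^ m 1 * D N r := by
    intro N r hr
    -- `shiftSeq m 1` is `m 2` by definition
    have hP' : pM (shiftSeq m) (m 2 * N + (r + 1)) = X ^ (r + 1) * pM (shiftSeq m) (m 2 * N) :=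
      pM_mul_add_of_lt (shiftSeq m) N hr
    have hX : (X : ℤ[X]) ^ m 1 = X * X ^ (m 1 - 1) := by rw [← pow_succ']; congr 1; omega
    simp only [D]
    rw [← add_assoc, pM_mul_succ m h1, add_assoc, hP', fpow_succ, hX]
    ring
  have wrap : ∀ N, D (N + 1) 0 = X ^ m 1 * D N (m 2 - 1) + g * pM (shiftSeq m) (m 2 * N) := by
    intro N
    have hq : m 2 * N + (m 2 - 1) + 1 = m 2 * (N + 1) := by
      have : 0 < m 2 := by omega
      rw [mul_add]; omega
    have hX : (X : ℤ[X]) ^ (m 1 + m 2 - 1) = X ^ m 1 * X ^ (m 2 - 1) := by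
      rw [← pow_add]; congr 1; omega
    simp only [D, g]
    rw [add_zero, ← hq, pM_mul_succ m h1, hq, Nat.sub_add_cancel (by omega : 1 ≤ m 2), hX]
    simp only [fpow, zero_add, range_one, sum_singleton, mul_zero, pow_zero]
    ring
  have along_block : ∀ N, g ∣ D N 0 → ∀ r < m 2, g ∣ D N r := by
    intro N h0 r
    induction r with
    | zero => exact fun _ => h0
    | succ r ih => exact fun hr => step N r hr ▸ dvd_mul_of_dvd_right (ih (by omega)) _
  induction N generalizing r with
  | zero => exact along_block 0 (by simp [D, pM_zero, fpow]) r hr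
  | succ N ih =>
    refine along_block _ ?_ r hr
    rw [wrap N]
    exact dvd_add (dvd_mul_of_dvd_right (ih (by omega)) _) (dvd_mul_right _ _)

theorem X_pow_mul_fpowQ_dvd_pM_sub (m : ℕ → ℕ) (h1 : 2 ≤ m 1) (N : ℕ) {r : ℕ} (hr : r < m 2) :
    X ^ (m 1 + m 2 - 1) * fpowQ (m 2) (m 1 - 1) ∣
      (pM m (m 1 * (m 2 * N + r))).map (Int.castRingHom ℚ) -
        X ^ r * fpowQ (r + 1) (m 1 - 1) * (pM (shiftSeq m) (m 2 * N)).map (Int.castRingHom ℚ) := by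
  simpa [fpow_map] using
    map_dvd (mapRingHom (Int.castRingHom ℚ)) (X_pow_mul_fpow_dvd_pM_sub m h1 N hr)

lemma sum_mul_prod_range_succ (m a : ℕ → ℕ) (k : ℕ) :
    ∑ j ∈ range (k + 1), a j * ∏ i ∈ range j, m i =
      a 0 + m 0 * ∑ j ∈ range k, a (j + 1) * ∏ i ∈ range j, m (i + 1) := by
  simp only [sum_range_succ' _ k, prod_range_succ', mul_sum]
  simp only [prod_range_zero, mul_one]
  rw [add_comm]
  congr 1
  exact sum_congr rfl fun j _ => by ring

lemma prod_Icc_one_succ {M : Type*} [CommMonoid M] (f : ℕ → M) (k : ℕ) :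
    ∏ j ∈ Icc 1 (k + 1), f j = f 1 * ∏ j ∈ Icc 1 k, f (j + 1) := by
  induction k with
  | zero => simp
  | succ k ih => rw [prod_Icc_succ_top (by omega), ih, prod_Icc_succ_top (by omega), mul_assoc]

theorem dvd_pM_mul_sub_prod (k : ℕ) (m a : ℕ → ℕ) (hm : ∀ i ≥ 1, 2 ≤ m i)
    (ha : ∀ j ∈ Icc 1 k, a j < m (j + 1)) (d : ℚ[X])
    (hd : ∀ j ∈ Icc 1 k, d ∣ X ^ (m j + m (j + 1) - 1) * fpowQ (m (j + 1)) (m j - 1)) :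
    d ∣ (pM m (m 1 * ∑ j ∈ range k, a (j + 1) * ∏ i ∈ range j, m (i + 2))).map (Int.castRingHom ℚ) -
      ∏ j ∈ Icc 1 k, X ^ a j * fpowQ (a j + 1) (m j - 1) := by
  induction k generalizing m a with
  | zero => simp [pM_zero]
  | succ k ih =>
    have h1 : 2 ≤ m 1 := hm 1 le_rfl
    have hsum : ∑ j ∈ range (k + 1), a (j + 1) * ∏ i ∈ range j, m (i + 2) =
        a 1 + m 2 * ∑ j ∈ range k, a (j + 2) * ∏ i ∈ range j, m (i + 3) :=
      sum_mul_prod_range_succ _ _ k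
    have hm' : ∀ i ≥ 1, 2 ≤ shiftSeq m i := fun i hi =>
      shiftSeq_of_pos m hi ▸ hm (i + 1) (by omega)
    have ha' : ∀ j ∈ Icc 1 k, a (j + 1) < shiftSeq m (j + 1) := by
      intro j hj
      rw [mem_Icc] at hj
      rw [shiftSeq_of_pos m (by omega)]
      exact ha (j + 1) (mem_Icc.2 (by omega))
    have hd' : ∀ j ∈ Icc 1 k, d ∣ X ^ (shiftSeq m j + shiftSeq m (j + 1) - 1) *
        fpowQ (shiftSeq m (j + 1)) (shiftSeq m j - 1) := by
      intro j hj
      rw [mem_Icc] at hj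
      rw [shiftSeq_of_pos m (by omega), shiftSeq_of_pos m (by omega)]
      exact hd (j + 1) (mem_Icc.2 (by omega))
    have hprod : ∏ j ∈ Icc 1 k, X ^ a (j + 1) * fpowQ (a (j + 1) + 1) (shiftSeq m j - 1) =
        ∏ j ∈ Icc 1 k, X ^ a (j + 1) * fpowQ (a (j + 1) + 1) (m (j + 1) - 1) :=
      prod_congr rfl fun j hj => by rw [shiftSeq_of_pos m (mem_Icc.1 hj).1]
    have ih' : d ∣ (pM (shiftSeq m) (m 2 * ∑ j ∈ range k, a (j + 2) * ∏ i ∈ range j, m (i + 3))).map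
          (Int.castRingHom ℚ) -
        ∏ j ∈ Icc 1 k, X ^ a (j + 1) * fpowQ (a (j + 1) + 1) (m (j + 1) - 1) := by
      rw [← hprod]
      exact ih (shiftSeq m) (fun j => a (j + 1)) hm' ha' hd'
    have key := X_pow_mul_fpowQ_dvd_pM_sub m h1
      (∑ j ∈ range k, a (j + 2) * ∏ i ∈ range j, m (i + 3)) (ha 1 (by simp))
    rw [hsum, prod_Icc_one_succ, add_comm]
    have hsplit := dvd_add ((hd 1 (by simp)).trans key)
      (dvd_mul_of_dvd_right ih' (X ^ a 1 * fpowQ (a 1 + 1) (m 1 - 1)))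
    rwa [mul_sub, sub_add_sub_cancel] at hsplit

/-- If n = a₀ + a₁M₁ + ⋯ + a_k M_k is the M-ary representation of n, then
p_M(n,t) ≡ t^{a₀} ∏ t^{aⱼ} f(aⱼ+1, t^{mⱼ-1}) modulo
g_k(t) = gcd(t^{m₁+m₂-1}f(m₂,t^{m₁-1}), …, t^{m_k+m_{k+1}-1}f(m_{k+1},t^{m_k-1})). -/
theorem pM_characterisation_mod (m : ℕ → ℕ) (h0 : m 0 = 1) (hm : ∀ i ≥ 1, 2 ≤ m i)
    (n k : ℕ) (a : ℕ → ℕ) (ha : ∀ j ≤ k, a j < m (j + 1))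
    (hn : n = ∑ j ∈ Finset.range (k + 1), a j * ∏ i ∈ Finset.range (j + 1), m i) :
    (Finset.Icc 1 k).gcd
        (fun j => Polynomial.X ^ (m j + m (j + 1) - 1) * fpowQ (m (j + 1)) (m j - 1)) ∣
      ((pM m n).map (Int.castRingHom ℚ) -
        Polynomial.X ^ (a 0) *
          ∏ j ∈ Finset.Icc 1 k, Polynomial.X ^ (a j) * fpowQ (a j + 1) (m j - 1)) := by
  have hn' : n = a 0 + m 1 * ∑ j ∈ range k, a (j + 1) * ∏ i ∈ range j, m (i + 2) := by
    rw [hn]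
    refine (sum_congr rfl fun j _ => ?_).trans (sum_mul_prod_range_succ (fun i => m (i + 1)) a k)
    rw [prod_range_succ', h0, mul_one]
  rw [hn', add_comm (a 0), pM_mul_add_of_lt m _ (ha 0 k.zero_le), Polynomial.map_mul,
    Polynomial.map_pow, map_X, ← mul_sub]
  refine dvd_mul_of_dvd_right (dvd_pM_mul_sub_prod k m a hm (fun j hj => ha j (mem_Icc.1 hj).2) _
    fun j hj => ?_) _
  exact gcd_dvd (f := fun j => X ^ (m j + m (j + 1) - 1) * fpowQ (m (j + 1)) (m j - 1)) hj
end
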